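/- Every Chevalley–Eilenberg 3-cocycle of Φ' with coefficients in the adjoint representation is a coboundary: H³(Φ',Φ') = 0. -/
import Mathlib


noncomputable section

/-- The bracket of Φ′ on `Fin 4 → ℂ`, basis `e₁,…,e₄` indexed `0,…,3`:
`[e₁,e₄]=[e₂,e₃]=-e₁`, `[e₂,e₄]=-(1/2)e₂`, `[e₃,e₄]=-(1/2)e₃`. -/
def brPhi' (x y : Fin 4 → ℂ) : Fin 4 → ℂ :=
  ![ -(x 0 * y 3 - x 3 * y 0) - (x 1 * y 2 - x 2 * y 1),
     -(1/2) * (x 1 * y 3 - x 3 * y 1),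
     -(1/2) * (x 2 * y 3 - x 3 * y 2),
     0 ]

/-- The Chevalley–Eilenberg coboundary of a 2-cochain on Φ′ (adjoint coefficients). -/
def d2 (Γ : (Fin 4 → ℂ) →ₗ[ℂ] (Fin 4 → ℂ) →ₗ[ℂ] (Fin 4 → ℂ))
    (x y z : Fin 4 → ℂ) : Fin 4 → ℂ :=
  brPhi' x (Γ y z) - brPhi' y (Γ x z) + brPhi' z (Γ x y)
    - Γ (brPhi' x y) z + Γ (brPhi' x z) y - Γ (brPhi' y z) x

/-- Standard basis vectors of `Fin 4 → ℂ`. -/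
def E : Fin 4 → Fin 4 → ℂ := ![![1,0,0,0],![0,1,0,0],![0,0,1,0],![0,0,0,1]]

/-- The Chevalley–Eilenberg coboundary of a 3-cochain on Φ′ (adjoint coefficients). -/
def d3 (Γ : (Fin 4 → ℂ) →ₗ[ℂ] (Fin 4 → ℂ) →ₗ[ℂ] (Fin 4 → ℂ) →ₗ[ℂ] (Fin 4 → ℂ))
    (a b c d : Fin 4 → ℂ) : Fin 4 → ℂ :=
  brPhi' a (Γ b c d) - brPhi' b (Γ a c d) + brPhi' c (Γ a b d) - brPhi' d (Γ a b c)
    - Γ (brPhi' a b) c d + Γ (brPhi' a c) b d - Γ (brPhi' a d) b c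
    - Γ (brPhi' b c) a d + Γ (brPhi' b d) a c - Γ (brPhi' c d) a b

set_option maxHeartbeats 1000000 in
/-- `H³(Φ′, Φ′) = 0`: every Chevalley–Eilenberg 3-cocycle of Φ′ with
coefficients in the adjoint representation is a coboundary. -/
theorem phi'_H3_trivial
    (Γ : (Fin 4 → ℂ) →ₗ[ℂ] (Fin 4 → ℂ) →ₗ[ℂ] (Fin 4 → ℂ) →ₗ[ℂ] (Fin 4 → ℂ))
    (halt₁ : ∀ x y : Fin 4 → ℂ, Γ x x y = 0)
    (halt₂ : ∀ x y : Fin 4 → ℂ, Γ x y y = 0)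
    (halt₃ : ∀ x y : Fin 4 → ℂ, Γ x y x = 0)
    (hcocycle : ∀ a b c d : Fin 4 → ℂ, d3 Γ a b c d = 0) :
    ∃ β : (Fin 4 → ℂ) →ₗ[ℂ] (Fin 4 → ℂ) →ₗ[ℂ] (Fin 4 → ℂ),
      (∀ x : Fin 4 → ℂ, β x x = 0) ∧
      ∀ a b c : Fin 4 → ℂ, d2 β a b c = Γ a b c := by
  have hexp : ∀ v : Fin 4 → ℂ, v = v 0 • E 0 + v 1 • E 1 + v 2 • E 2 + v 3 • E 3 := by
    intro v; funext i; fin_cases i <;> simp [E]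
  have sw12 : ∀ x y z : Fin 4 → ℂ, Γ y x z = -Γ x y z := by
    intro x y z
    have h := halt₁ (x + y) z
    simp only [map_add, LinearMap.add_apply, halt₁, zero_add, add_zero] at h
    exact eq_neg_of_add_eq_zero_left h
  have sw23 : ∀ x y z : Fin 4 → ℂ, Γ x z y = -Γ x y z := by
    intro x y z
    have h := halt₂ x (y + z)
    simp only [map_add, LinearMap.add_apply, halt₂, zero_add, add_zero] at h
    exact eq_neg_of_add_eq_zero_left h
  have sw13 : ∀ x y z : Fin 4 → ℂ, Γ z y x = -Γ x y z := by
    intro x y z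
    have h := halt₃ (x + z) y
    simp only [map_add, LinearMap.add_apply, halt₃, zero_add, add_zero] at h
    exact eq_neg_of_add_eq_zero_left h
  have cycl : ∀ x y z : Fin 4 → ℂ, Γ y z x = Γ x y z := by
    intro x y z; rw [sw13 x z y, sw23 x y z, neg_neg]
  have cycr : ∀ x y z : Fin 4 → ℂ, Γ z x y = Γ x y z := by
    intro x y z; rw [sw12 x z y, sw23 x y z, neg_neg]
  have r102 : ∀ i : Fin 4, Γ (E 1) (E 0) (E 2) i = -Γ (E 0) (E 1) (E 2) i := fun i => by
    rw [sw12 (E 0) (E 1) (E 2)]; simp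
  have r021 : ∀ i : Fin 4, Γ (E 0) (E 2) (E 1) i = -Γ (E 0) (E 1) (E 2) i := fun i => by
    rw [sw23 (E 0) (E 1) (E 2)]; simp
  have r210 : ∀ i : Fin 4, Γ (E 2) (E 1) (E 0) i = -Γ (E 0) (E 1) (E 2) i := fun i => by
    rw [sw13 (E 0) (E 1) (E 2)]; simp
  have r120 : ∀ i : Fin 4, Γ (E 1) (E 2) (E 0) i = Γ (E 0) (E 1) (E 2) i := fun i => by
    rw [cycl (E 0) (E 1) (E 2)]
  have r201 : ∀ i : Fin 4, Γ (E 2) (E 0) (E 1) i = Γ (E 0) (E 1) (E 2) i := fun i => by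
    rw [cycr (E 0) (E 1) (E 2)]
  have r103 : ∀ i : Fin 4, Γ (E 1) (E 0) (E 3) i = -Γ (E 0) (E 1) (E 3) i := fun i => by
    rw [sw12 (E 0) (E 1) (E 3)]; simp
  have r031 : ∀ i : Fin 4, Γ (E 0) (E 3) (E 1) i = -Γ (E 0) (E 1) (E 3) i := fun i => by
    rw [sw23 (E 0) (E 1) (E 3)]; simp
  have r310 : ∀ i : Fin 4, Γ (E 3) (E 1) (E 0) i = -Γ (E 0) (E 1) (E 3) i := fun i => by
    rw [sw13 (E 0) (E 1) (E 3)]; simp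
  have r130 : ∀ i : Fin 4, Γ (E 1) (E 3) (E 0) i = Γ (E 0) (E 1) (E 3) i := fun i => by
    rw [cycl (E 0) (E 1) (E 3)]
  have r301 : ∀ i : Fin 4, Γ (E 3) (E 0) (E 1) i = Γ (E 0) (E 1) (E 3) i := fun i => by
    rw [cycr (E 0) (E 1) (E 3)]
  have r203 : ∀ i : Fin 4, Γ (E 2) (E 0) (E 3) i = -Γ (E 0) (E 2) (E 3) i := fun i => by
    rw [sw12 (E 0) (E 2) (E 3)]; simp
  have r032 : ∀ i : Fin 4, Γ (E 0) (E 3) (E 2) i = -Γ (E 0) (E 2) (E 3) i := fun i => by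
    rw [sw23 (E 0) (E 2) (E 3)]; simp
  have r320 : ∀ i : Fin 4, Γ (E 3) (E 2) (E 0) i = -Γ (E 0) (E 2) (E 3) i := fun i => by
    rw [sw13 (E 0) (E 2) (E 3)]; simp
  have r230 : ∀ i : Fin 4, Γ (E 2) (E 3) (E 0) i = Γ (E 0) (E 2) (E 3) i := fun i => by
    rw [cycl (E 0) (E 2) (E 3)]
  have r302 : ∀ i : Fin 4, Γ (E 3) (E 0) (E 2) i = Γ (E 0) (E 2) (E 3) i := fun i => by
    rw [cycr (E 0) (E 2) (E 3)]
  have r213 : ∀ i : Fin 4, Γ (E 2) (E 1) (E 3) i = -Γ (E 1) (E 2) (E 3) i := fun i => by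
    rw [sw12 (E 1) (E 2) (E 3)]; simp
  have r132 : ∀ i : Fin 4, Γ (E 1) (E 3) (E 2) i = -Γ (E 1) (E 2) (E 3) i := fun i => by
    rw [sw23 (E 1) (E 2) (E 3)]; simp
  have r321 : ∀ i : Fin 4, Γ (E 3) (E 2) (E 1) i = -Γ (E 1) (E 2) (E 3) i := fun i => by
    rw [sw13 (E 1) (E 2) (E 3)]; simp
  have r231 : ∀ i : Fin 4, Γ (E 2) (E 3) (E 1) i = Γ (E 1) (E 2) (E 3) i := fun i => by
    rw [cycl (E 1) (E 2) (E 3)]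
  have r312 : ∀ i : Fin 4, Γ (E 3) (E 1) (E 2) i = Γ (E 1) (E 2) (E 3) i := fun i => by
    rw [cycr (E 1) (E 2) (E 3)]
  have hGm : ∀ (a b c : Fin 4 → ℂ) (m : Fin 4), Γ a b c m =
      (a 0 * (b 1 * c 2 - b 2 * c 1) - a 1 * (b 0 * c 2 - b 2 * c 0) + a 2 * (b 0 * c 1 - b 1 * c 0)) * Γ (E 0) (E 1) (E 2) m + (a 0 * (b 1 * c 3 - b 3 * c 1) - a 1 * (b 0 * c 3 - b 3 * c 0) + a 3 * (b 0 * c 1 - b 1 * c 0)) * Γ (E 0) (E 1) (E 3) m + (a 0 * (b 2 * c 3 - b 3 * c 2) - a 2 * (b 0 * c 3 - b 3 * c 0) + a 3 * (b 0 * c 2 - b 2 * c 0)) * Γ (E 0) (E 2) (E 3) m + (a 1 * (b 2 * c 3 - b 3 * c 2) - a 2 * (b 1 * c 3 - b 3 * c 1) + a 3 * (b 1 * c 2 - b 2 * c 1)) * Γ (E 1) (E 2) (E 3) m := by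
    intro a b c m
    conv_lhs => rw [hexp a, hexp b, hexp c]
    simp only [map_add, map_smul, LinearMap.add_apply, LinearMap.smul_apply,
      halt₁, halt₂, halt₃, smul_zero, zero_add, add_zero, Pi.add_apply,
      Pi.smul_apply, Pi.zero_apply, smul_eq_mul]
    simp only [r102, r021, r210, r120, r201, r103, r031, r310, r130, r301, r203, r032, r320, r230, r302, r213, r132, r321, r231, r312]
    ring
  have hb03 : brPhi' (E 0) (E 3) = -E 0 := by funext i; fin_cases i <;> simp [brPhi', E, Matrix.vecHead, Matrix.vecTail]
  have hb12 : brPhi' (E 1) (E 2) = -E 0 := by funext i; fin_cases i <;> simp [brPhi', E, Matrix.vecHead, Matrix.vecTail]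
  have hb13 : brPhi' (E 1) (E 3) = -(1/2 : ℂ) • E 1 := by funext i; fin_cases i <;> simp [brPhi', E, Matrix.vecHead, Matrix.vecTail]
  have hb23 : brPhi' (E 2) (E 3) = -(1/2 : ℂ) • E 2 := by funext i; fin_cases i <;> simp [brPhi', E, Matrix.vecHead, Matrix.vecTail]
  have hb01 : brPhi' (E 0) (E 1) = 0 := by funext i; fin_cases i <;> simp [brPhi', E, Matrix.vecHead, Matrix.vecTail]
  have hb02 : brPhi' (E 0) (E 2) = 0 := by funext i; fin_cases i <;> simp [brPhi', E, Matrix.vecHead, Matrix.vecTail]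
  have hc := hcocycle (E 0) (E 1) (E 2) (E 3)
  simp only [d3, hb01, hb02, hb03, hb12, hb13, hb23, map_neg, map_smul, map_zero,
    LinearMap.neg_apply, LinearMap.smul_apply, LinearMap.zero_apply] at hc
  have h0 := congrFun hc 0
  have h1 := congrFun hc 1
  have h2 := congrFun hc 2
  have h3 := congrFun hc 3
  simp only [Pi.sub_apply, Pi.add_apply, Pi.neg_apply, Pi.smul_apply, Pi.zero_apply,
    smul_eq_mul, brPhi'] at h0 h1 h2 h3
  have hEc : ∀ i j : Fin 4, E i j = if i = j then 1 else 0 := by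
    intro i j; fin_cases i <;> fin_cases j <;> simp [E, Matrix.vecHead, Matrix.vecTail]
  simp [hEc, halt₁, halt₂, halt₃, Matrix.vecHead, Matrix.vecTail] at h0 h1 h2 h3
  simp only [r102, r021, r210, r120, r201, r103, r031, r310, r130, r301, r203, r032, r320, r230, r302, r213, r132, r321, r231, r312] at h0 h1 h2 h3
  have rel0 : Γ (E 0) (E 2) (E 3) 2 + Γ (E 0) (E 1) (E 3) 1 + Γ (E 0) (E 1) (E 2) 0 - Γ (E 1) (E 2) (E 3) 3 = 0 := by
    linear_combination h0
  have rel1 : Γ (E 0) (E 2) (E 3) 3 + 3 * Γ (E 0) (E 1) (E 2) 1 = 0 := by linear_combination 2 * h1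
  have rel2 : Γ (E 0) (E 1) (E 3) 3 - 3 * Γ (E 0) (E 1) (E 2) 2 = 0 := by linear_combination (-2) * h2
  have rel3 : Γ (E 0) (E 1) (E 2) 3 = 0 := by linear_combination h3 / 2
  obtain ⟨β, hβ⟩ : ∃ β : (Fin 4 → ℂ) →ₗ[ℂ] (Fin 4 → ℂ) →ₗ[ℂ] (Fin 4 → ℂ),
      ∀ a b : Fin 4 → ℂ, β a b =
        ![(a 0 * b 1 - a 1 * b 0) * (-2 * Γ (E 0) (E 1) (E 3) 0 + 2 * Γ (E 1) (E 2) (E 3) 2) + (a 0 * b 2 - a 2 * b 0) * (-2 * Γ (E 0) (E 2) (E 3) 0 - 2 * Γ (E 1) (E 2) (E 3) 1) + (a 0 * b 3 - a 3 * b 0) * Γ (E 1) (E 2) (E 3) 0,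
        (a 0 * b 1 - a 1 * b 0) * (-(1/2) * Γ (E 0) (E 1) (E 3) 1 + (1/2) * Γ (E 0) (E 2) (E 3) 2 + (1/2) * Γ (E 0) (E 1) (E 2) 0) + (a 0 * b 2 - a 2 * b 0) * (-(Γ (E 0) (E 2) (E 3) 1)) + (a 0 * b 3 - a 3 * b 0) * Γ (E 1) (E 2) (E 3) 1,
        (a 0 * b 1 - a 1 * b 0) * (-(Γ (E 0) (E 1) (E 3) 2)) + (a 0 * b 2 - a 2 * b 0) * ((1/2) * Γ (E 0) (E 1) (E 3) 1 + (1/2) * Γ (E 0) (E 1) (E 2) 0 - (1/2) * Γ (E 0) (E 2) (E 3) 2) + (a 0 * b 3 - a 3 * b 0) * Γ (E 1) (E 2) (E 3) 2,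
        (a 0 * b 1 - a 1 * b 0) * (-2 * Γ (E 0) (E 1) (E 2) 2) + (a 0 * b 2 - a 2 * b 0) * (2 * Γ (E 0) (E 1) (E 2) 1) + (a 0 * b 3 - a 3 * b 0) * (Γ (E 0) (E 2) (E 3) 2 + Γ (E 0) (E 1) (E 3) 1 + Γ (E 0) (E 1) (E 2) 0)] := by
    refine ⟨LinearMap.mk₂ ℂ (fun a b =>
        ![(a 0 * b 1 - a 1 * b 0) * (-2 * Γ (E 0) (E 1) (E 3) 0 + 2 * Γ (E 1) (E 2) (E 3) 2) + (a 0 * b 2 - a 2 * b 0) * (-2 * Γ (E 0) (E 2) (E 3) 0 - 2 * Γ (E 1) (E 2) (E 3) 1) + (a 0 * b 3 - a 3 * b 0) * Γ (E 1) (E 2) (E 3) 0,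
        (a 0 * b 1 - a 1 * b 0) * (-(1/2) * Γ (E 0) (E 1) (E 3) 1 + (1/2) * Γ (E 0) (E 2) (E 3) 2 + (1/2) * Γ (E 0) (E 1) (E 2) 0) + (a 0 * b 2 - a 2 * b 0) * (-(Γ (E 0) (E 2) (E 3) 1)) + (a 0 * b 3 - a 3 * b 0) * Γ (E 1) (E 2) (E 3) 1,
        (a 0 * b 1 - a 1 * b 0) * (-(Γ (E 0) (E 1) (E 3) 2)) + (a 0 * b 2 - a 2 * b 0) * ((1/2) * Γ (E 0) (E 1) (E 3) 1 + (1/2) * Γ (E 0) (E 1) (E 2) 0 - (1/2) * Γ (E 0) (E 2) (E 3) 2) + (a 0 * b 3 - a 3 * b 0) * Γ (E 1) (E 2) (E 3) 2,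
        (a 0 * b 1 - a 1 * b 0) * (-2 * Γ (E 0) (E 1) (E 2) 2) + (a 0 * b 2 - a 2 * b 0) * (2 * Γ (E 0) (E 1) (E 2) 1) + (a 0 * b 3 - a 3 * b 0) * (Γ (E 0) (E 2) (E 3) 2 + Γ (E 0) (E 1) (E 3) 1 + Γ (E 0) (E 1) (E 2) 0)]) ?_ ?_ ?_ ?_, fun a b => rfl⟩
    · intro a a' b; funext i; fin_cases i <;> (simp [Pi.add_apply]; ring)
    · intro s a b; funext i; fin_cases i <;> (simp [Pi.smul_apply, smul_eq_mul]; ring)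
    · intro a b b'; funext i; fin_cases i <;> (simp [Pi.add_apply]; ring)
    · intro a s b; funext i; fin_cases i <;> (simp [Pi.smul_apply, smul_eq_mul]; ring)
  refine ⟨β, ?_, ?_⟩
  · intro x; rw [hβ]; funext i; fin_cases i <;> (simp; ring)
  have hbr0 : ∀ x y : Fin 4 → ℂ, brPhi' x y 0 = -(x 0 * y 3 - x 3 * y 0) - (x 1 * y 2 - x 2 * y 1) := fun x y => rfl
  have hbr1 : ∀ x y : Fin 4 → ℂ, brPhi' x y 1 = -(1/2) * (x 1 * y 3 - x 3 * y 1) := fun x y => rfl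
  have hbr2 : ∀ x y : Fin 4 → ℂ, brPhi' x y 2 = -(1/2) * (x 2 * y 3 - x 3 * y 2) := fun x y => rfl
  have hbr3 : ∀ x y : Fin 4 → ℂ, brPhi' x y 3 = 0 := fun x y => rfl
  have hβ0 : ∀ a b : Fin 4 → ℂ, β a b 0 = (a 0 * b 1 - a 1 * b 0) * (-2 * Γ (E 0) (E 1) (E 3) 0 + 2 * Γ (E 1) (E 2) (E 3) 2) + (a 0 * b 2 - a 2 * b 0) * (-2 * Γ (E 0) (E 2) (E 3) 0 - 2 * Γ (E 1) (E 2) (E 3) 1) + (a 0 * b 3 - a 3 * b 0) * Γ (E 1) (E 2) (E 3) 0 := fun a b => by rw [hβ]; rfl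
  have hβ1 : ∀ a b : Fin 4 → ℂ, β a b 1 = (a 0 * b 1 - a 1 * b 0) * (-(1/2) * Γ (E 0) (E 1) (E 3) 1 + (1/2) * Γ (E 0) (E 2) (E 3) 2 + (1/2) * Γ (E 0) (E 1) (E 2) 0) + (a 0 * b 2 - a 2 * b 0) * (-(Γ (E 0) (E 2) (E 3) 1)) + (a 0 * b 3 - a 3 * b 0) * Γ (E 1) (E 2) (E 3) 1 := fun a b => by rw [hβ]; rfl
  have hβ2 : ∀ a b : Fin 4 → ℂ, β a b 2 = (a 0 * b 1 - a 1 * b 0) * (-(Γ (E 0) (E 1) (E 3) 2)) + (a 0 * b 2 - a 2 * b 0) * ((1/2) * Γ (E 0) (E 1) (E 3) 1 + (1/2) * Γ (E 0) (E 1) (E 2) 0 - (1/2) * Γ (E 0) (E 2) (E 3) 2) + (a 0 * b 3 - a 3 * b 0) * Γ (E 1) (E 2) (E 3) 2 := fun a b => by rw [hβ]; rfl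
  have hβ3 : ∀ a b : Fin 4 → ℂ, β a b 3 = (a 0 * b 1 - a 1 * b 0) * (-2 * Γ (E 0) (E 1) (E 2) 2) + (a 0 * b 2 - a 2 * b 0) * (2 * Γ (E 0) (E 1) (E 2) 1) + (a 0 * b 3 - a 3 * b 0) * (Γ (E 0) (E 2) (E 3) 2 + Γ (E 0) (E 1) (E 3) 1 + Γ (E 0) (E 1) (E 2) 0) := fun a b => by rw [hβ]; rfl
  · intro a b c
    have e0 : d2 β a b c 0 = Γ a b c 0 := by
      rw [hGm a b c 0]
      simp only [d2, Pi.sub_apply, Pi.add_apply, hbr0, hbr1, hbr2, hbr3, hβ0, hβ1, hβ2, hβ3]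
      ring
    have e1 : d2 β a b c 1 = Γ a b c 1 := by
      rw [hGm a b c 1]
      simp only [d2, Pi.sub_apply, Pi.add_apply, hbr0, hbr1, hbr2, hbr3, hβ0, hβ1, hβ2, hβ3]
      ring
    have e2 : d2 β a b c 2 = Γ a b c 2 := by
      rw [hGm a b c 2]
      simp only [d2, Pi.sub_apply, Pi.add_apply, hbr0, hbr1, hbr2, hbr3, hβ0, hβ1, hβ2, hβ3]
      ring
    have e3 : d2 β a b c 3 = Γ a b c 3 := by
      rw [hGm a b c 3]
      simp only [d2, Pi.sub_apply, Pi.add_apply, hbr0, hbr1, hbr2, hbr3, hβ0, hβ1, hβ2, hβ3]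
      linear_combination (a 1 * (b 2 * c 3 - b 3 * c 2) - a 2 * (b 1 * c 3 - b 3 * c 1) + a 3 * (b 1 * c 2 - b 2 * c 1)) * rel0 - (a 0 * (b 2 * c 3 - b 3 * c 2) - a 2 * (b 0 * c 3 - b 3 * c 0) + a 3 * (b 0 * c 2 - b 2 * c 0)) * rel1 - (a 0 * (b 1 * c 3 - b 3 * c 1) - a 1 * (b 0 * c 3 - b 3 * c 0) + a 3 * (b 0 * c 1 - b 1 * c 0)) * rel2 - (a 0 * (b 1 * c 2 - b 2 * c 1) - a 1 * (b 0 * c 2 - b 2 * c 0) + a 2 * (b 0 * c 1 - b 1 * c 0)) * rel3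
    funext m
    fin_cases m
    · exact e0
    · exact e1
    · exact e2
    · exact e3
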